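/- The formula φ_sim := νX. ((νY. (⋀_{p∈P} (p(x) ⇔ p(y))) ∧ ⋀_{a∈Λ} [a]_x ⟨a⟩_y Y) ∧ {(x,y)←(y,x)}X) characterizes simulation equivalence: for every finite LTS L over finite sets Λ of labels and P of propositions and every first-order valuation v, v ∈ ⟦φ_sim⟧_L if and only if v(x) and v(y) are simulation equivalent, i.e. there exist simulations R, R' with (v(x),v(y))∈R and (v(y),v(x))∈R'. -/

import Mathlib

/-- A labeled transition system over edge labels `Λ` and atomic propositions `P`. -/
structure LTS (Λ P : Type) where
  S : Type
  s0 : S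
  Tr : S → Λ → S → Prop
  rho : S → Set P

/-- Formulas of the higher-dimensional modal μ-calculus Lμω. -/
inductive Formula (Λ P V V2 : Type) : Type
  | prop : P → V → Formula Λ P V V2
  | svar : V2 → Formula Λ P V V2
  | neg : Formula Λ P V V2 → Formula Λ P V V2
  | and : Formula Λ P V V2 → Formula Λ P V V2 → Formula Λ P V V2
  | dia : Λ → V → Formula Λ P V V2 → Formula Λ P V V2
  | mu : V2 → Formula Λ P V V2 → Formula Λ P V V2
  | repl : (V → V) → Formula Λ P V V2 → Formula Λ P V V2

variable {Λ P V V2 : Type}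

/-- Semantics of Lμω : a set of first-order valuations. -/
def sem [DecidableEq V] [DecidableEq V2] (L : LTS Λ P) :
    Formula Λ P V V2 → (V2 → Set (V → L.S)) → Set (V → L.S)
  | .prop p x, _ => {v | p ∈ L.rho (v x)}
  | .svar X, 𝒱 => 𝒱 X
  | .neg φ, 𝒱 => (sem L φ 𝒱)ᶜ
  | .and φ ψ, 𝒱 => sem L φ 𝒱 ∩ sem L ψ 𝒱
  | .dia a x φ, 𝒱 => {v | ∃ s, L.Tr (v x) a s ∧ Function.update v x s ∈ sem L φ 𝒱}
  | .mu X φ, 𝒱 => ⋂₀ {Q | sem L φ (Function.update 𝒱 X Q) ⊆ Q}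
  | .repl κ φ, 𝒱 => {v | (fun z => v (κ z)) ∈ sem L φ 𝒱}

/-- Derived operator: disjunction. -/
def Formula.or (φ ψ : Formula Λ P V V2) : Formula Λ P V V2 := .neg (.and (.neg φ) (.neg ψ))

/-- Derived operator: box modality. -/
def Formula.box (a : Λ) (x : V) (φ : Formula Λ P V V2) : Formula Λ P V V2 :=
  .neg (.dia a x (.neg φ))

/-- Replace every occurrence of the second-order variable `X` by `¬X`. -/
def Formula.substNeg [DecidableEq V2] (X : V2) : Formula Λ P V V2 → Formula Λ P V V2
  | .prop p x => .prop p x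
  | .svar Y => if Y = X then .neg (.svar Y) else .svar Y
  | .neg φ => .neg (φ.substNeg X)
  | .and φ ψ => .and (φ.substNeg X) (ψ.substNeg X)
  | .dia a x φ => .dia a x (φ.substNeg X)
  | .mu Y φ => .mu Y (φ.substNeg X)
  | .repl κ φ => .repl κ (φ.substNeg X)

/-- Derived operator: greatest fixed point, `νX.φ := ¬μX.¬φ[X:=¬X]`. -/
def Formula.nu [DecidableEq V2] (X : V2) (φ : Formula Λ P V V2) : Formula Λ P V V2 :=
  .neg (.mu X (.neg (φ.substNeg X)))

/-- Falsity, definable as `μX.X`. -/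
def Formula.bot (X : V2) : Formula Λ P V V2 := .mu X (.svar X)

/-- Truth. -/
def Formula.top (X : V2) : Formula Λ P V V2 := .neg (.bot X)

/-- Finite conjunction (`X` is a dummy second-order variable for the empty case). -/
def bigAnd (X : V2) (l : List (Formula Λ P V V2)) : Formula Λ P V V2 := l.foldr .and (.top X)

/-- Finite disjunction. -/
def bigOr (X : V2) (l : List (Formula Λ P V V2)) : Formula Λ P V V2 := l.foldr .or (.bot X)

/-- Derived operator: implication. -/
def Formula.imp (φ ψ : Formula Λ P V V2) : Formula Λ P V V2 := .neg (.and φ (.neg ψ))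

/-- Derived operator: bi-implication. -/
def Formula.iff (φ ψ : Formula Λ P V V2) : Formula Λ P V V2 := .and (φ.imp ψ) (ψ.imp φ)

/-- A simulation on an LTS: related states satisfy the same propositions and every move
of the first state can be matched by the second. -/
def IsSimulation {Λ P : Type} (L : LTS Λ P) (R : L.S → L.S → Prop) : Prop :=
  ∀ s₁ s₂, R s₁ s₂ →
    (∀ p, p ∈ L.rho s₁ ↔ p ∈ L.rho s₂) ∧
    ∀ a s₁', L.Tr s₁ a s₁' → ∃ s₂', L.Tr s₂ a s₂' ∧ R s₁' s₂'

/-- A bisimulation is a symmetric simulation (`R = R⁻¹`). -/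
def IsBisimulation {Λ P : Type} (L : LTS Λ P) (R : L.S → L.S → Prop) : Prop :=
  IsSimulation L R ∧ ∀ s t, R s t ↔ R t s

/-- Two states are bisimilar if some bisimulation contains them. -/
def Bisimilar {Λ P : Type} (L : LTS Λ P) (s t : L.S) : Prop :=
  ∃ R, IsBisimulation L R ∧ R s t

/-- Two states are simulation equivalent if each simulates the other (via possibly
different simulations). -/
def SimulationEquivalent {Λ P : Type} (L : LTS Λ P) (s t : L.S) : Prop :=
  ∃ R R', IsSimulation L R ∧ IsSimulation L R' ∧ R s t ∧ R' t s

/-- The variable replacement swapping `x` and `y`. -/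
def swapRepl {V : Type} [DecidableEq V] (x y : V) : V → V :=
  fun z => if z = x then y else if z = y then x else z

/-- The formula
`νX. ((νY. ⋀_{p∈P} (p(x) ⇔ p(y)) ∧ ⋀_{a∈Λ} [a]_x⟨a⟩_y Y) ∧ {(x,y)←(y,x)}X)`
(second-order variables are natural numbers; `X` is `0`, `Y` is `1`, `2` is a dummy). -/
noncomputable def phiSim (Λ P : Type) [Fintype Λ] [Fintype P] {V : Type} [DecidableEq V]
    (x y : V) : Formula Λ P V ℕ :=
  Formula.nu 0 (.and
    (Formula.nu 1 (.and
      (bigAnd 2 ((Finset.univ : Finset P).toList.map fun p =>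
        Formula.iff (.prop p x) (.prop p y)))
      (bigAnd 2 ((Finset.univ : Finset Λ).toList.map fun a =>
        Formula.box a x (.dia a y (.svar 1))))))
    (.repl (swapRepl x y) (.svar 0)))

/-!
Both fixed points are unfolded by Knaster–Tarski: a valuation lies in `νX.φ` iff it lies in
some post-fixed point of `Q ↦ ⟦φ⟧[X ↦ Q]`. A post-fixed point of the inner body, read on the
pair `(x, y)`, is exactly a simulation, so the inner formula says that `v y` simulates `v x`.
The outer body conjoins this with the same property of the swapped valuation, and since the
swap is an involution its greatest fixed point is that conjunction itself.
-/

namespace Formula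

/-- `substNeg` does not stop at binders, so its semantics is only right when `X` is not rebound. -/
def NoMuBinder (X : V2) : Formula Λ P V V2 → Prop
  | .prop _ _ => True
  | .svar _ => True
  | .neg φ => φ.NoMuBinder X
  | .and φ ψ => φ.NoMuBinder X ∧ ψ.NoMuBinder X
  | .dia _ _ φ => φ.NoMuBinder X
  | .mu Y φ => Y ≠ X ∧ φ.NoMuBinder X
  | .repl _ φ => φ.NoMuBinder X

theorem NoMuBinder.substNeg [DecidableEq V2] {X Y : V2} {φ : Formula Λ P V V2}
    (h : φ.NoMuBinder X) : (φ.substNeg Y).NoMuBinder X := by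
  induction φ with
  | prop => exact h
  | svar Z => by_cases hZ : Z = Y <;> simp [Formula.substNeg, hZ, NoMuBinder]
  | neg _ ih => exact ih h
  | and _ _ ih₁ ih₂ => exact ⟨ih₁ h.1, ih₂ h.2⟩
  | dia _ _ _ ih => exact ih h
  | mu _ _ ih => exact ⟨h.1, ih h.2⟩
  | repl _ _ ih => exact ih h

theorem noMuBinder_bigAnd {X Y : V2} (hYX : Y ≠ X) {l : List (Formula Λ P V V2)}
    (h : ∀ φ ∈ l, φ.NoMuBinder X) : (bigAnd Y l).NoMuBinder X := by
  induction l with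
  | nil => exact ⟨hYX, trivial⟩
  | cons φ l ih => exact ⟨h φ List.mem_cons_self, ih fun ψ hψ => h ψ (List.mem_cons_of_mem _ hψ)⟩

end Formula

open Formula Function

section Semantics

variable [DecidableEq V] [DecidableEq V2] (L : LTS Λ P)

theorem sem_substNeg {X : V2} {φ : Formula Λ P V V2} (h : φ.NoMuBinder X)
    (𝒱 : V2 → Set (V → L.S)) :
    sem L (φ.substNeg X) 𝒱 = sem L φ (update 𝒱 X (𝒱 X)ᶜ) := by
  induction φ generalizing 𝒱 with
  | prop => rfl
  | svar Z =>
    by_cases hZ : Z = X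
    · subst hZ; simp [Formula.substNeg, sem]
    · simp [Formula.substNeg, hZ, sem]
  | neg _ ih => simp [Formula.substNeg, sem, ih h]
  | and _ _ ih₁ ih₂ => simp [Formula.substNeg, sem, ih₁ h.1, ih₂ h.2]
  | dia _ _ _ ih => simp [Formula.substNeg, sem, ih h]
  | mu Z _ ih =>
    simp only [Formula.substNeg, sem, ih h.2, update_of_ne h.1.symm, update_comm h.1]
  | repl _ _ ih => simp [Formula.substNeg, sem, ih h]

theorem mem_sem_nu {X : V2} {φ : Formula Λ P V V2} (h : φ.NoMuBinder X)
    (𝒱 : V2 → Set (V → L.S)) (v : V → L.S) :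
    v ∈ sem L (Formula.nu X φ) 𝒱 ↔ ∃ Q, Q ⊆ sem L φ (update 𝒱 X Q) ∧ v ∈ Q := by
  simp only [Formula.nu, sem, sem_substNeg L h, update_self, update_idem, Set.mem_compl_iff,
    Set.mem_sInter, Set.mem_ofPred_eq, not_forall, exists_prop]
  constructor
  · rintro ⟨Q, hQ, hv⟩
    refine ⟨Qᶜ, fun w hw => ?_, hv⟩
    by_contra hc
    exact hw (hQ hc)
  · rintro ⟨Q, hQ, hv⟩
    refine ⟨Qᶜ, fun w hw hwQ => ?_, not_not_intro hv⟩
    rw [compl_compl] at hw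
    exact hw (hQ hwQ)

theorem sem_top (X : V2) (𝒱 : V2 → Set (V → L.S)) : sem L (Formula.top X) 𝒱 = Set.univ := by
  simp only [Formula.top, Formula.bot, sem, Set.compl_univ_iff]
  exact Set.subset_empty_iff.1 (Set.sInter_subset_of_mem (by simp))

theorem mem_sem_bigAnd (X : V2) (l : List (Formula Λ P V V2)) (𝒱 : V2 → Set (V → L.S))
    (v : V → L.S) : v ∈ sem L (bigAnd X l) 𝒱 ↔ ∀ φ ∈ l, v ∈ sem L φ 𝒱 := by
  induction l with
  | nil => simp [bigAnd, sem_top]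
  | cons φ l ih => simp_all [bigAnd, sem]

theorem mem_sem_iff_prop (p : P) (x y : V) (𝒱 : V2 → Set (V → L.S)) (v : V → L.S) :
    v ∈ sem L (Formula.iff (.prop p x) (.prop p y)) 𝒱 ↔
      (p ∈ L.rho (v x) ↔ p ∈ L.rho (v y)) := by
  simp only [Formula.iff, Formula.imp, sem, Set.mem_inter_iff, Set.mem_compl_iff,
    Set.mem_ofPred_eq]
  tauto

theorem mem_sem_box_dia (a : Λ) {x y : V} (hxy : x ≠ y) (X : V2) (𝒱 : V2 → Set (V → L.S))
    (v : V → L.S) :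
    v ∈ sem L (Formula.box a x (.dia a y (.svar X))) 𝒱 ↔
      ∀ s, L.Tr (v x) a s → ∃ t, L.Tr (v y) a t ∧ update (update v x s) y t ∈ 𝒱 X := by
  simp only [Formula.box, sem, Set.mem_compl_iff, Set.mem_ofPred_eq, not_exists, not_and,
    not_not, not_forall, exists_prop, update_of_ne hxy.symm]

theorem mem_sem_nu_and_repl {X : V2} {ψ : Formula Λ P V V2} (hψ : ψ.NoMuBinder X)
    {κ : V → V} (hκ : Involutive κ) {𝒱 : V2 → Set (V → L.S)} {A : Set (V → L.S)}
    (hA : ∀ Q, sem L ψ (update 𝒱 X Q) = A) (v : V → L.S) :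
    v ∈ sem L (Formula.nu X (.and ψ (.repl κ (.svar X)))) 𝒱 ↔ v ∈ A ∧ v ∘ κ ∈ A := by
  have hbody : ∀ Q, sem L (.and ψ (.repl κ (.svar X))) (update 𝒱 X Q) = A ∩ {w | w ∘ κ ∈ Q} :=
    fun Q => by simp only [sem, hA, update_self]; rfl
  have hbinder : NoMuBinder X (Formula.and ψ (.repl κ (.svar X))) := ⟨hψ, trivial⟩
  simp only [mem_sem_nu L hbinder, hbody]
  constructor
  · rintro ⟨Q, hQ, hv⟩
    exact ⟨(hQ hv).1, (hQ (hQ hv).2).1⟩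
  · rintro ⟨hv, hvκ⟩
    refine ⟨{w | w ∈ A ∧ w ∘ κ ∈ A}, fun w ⟨hw, hwκ⟩ => ⟨hw, hwκ, ?_⟩, hv, hvκ⟩
    rwa [comp_assoc, hκ.comp_self, comp_id]

end Semantics

def SimulatedBy {Λ P : Type} (L : LTS Λ P) (s t : L.S) : Prop :=
  ∃ R, IsSimulation L R ∧ R s t

theorem simulationEquivalent_iff {Λ P : Type} (L : LTS Λ P) (s t : L.S) :
    SimulationEquivalent L s t ↔ SimulatedBy L s t ∧ SimulatedBy L t s :=
  ⟨fun ⟨R, R', hR, hR', hst, hts⟩ => ⟨⟨R, hR, hst⟩, ⟨R', hR', hts⟩⟩,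
    fun ⟨⟨R, hR, hst⟩, ⟨R', hR', hts⟩⟩ => ⟨R, R', hR, hR', hst, hts⟩⟩

theorem swapRepl_eq_swap [DecidableEq V] (x y : V) : swapRepl x y = Equiv.swap x y :=
  funext fun z => (Equiv.swap_apply_def x y z).symm

section OneWay

variable [Fintype Λ] [Fintype P] (L : LTS Λ P) {x y : V}

noncomputable def simStep (Λ P : Type) [Fintype Λ] [Fintype P] (x y : V) : Formula Λ P V ℕ :=
  .and
    (bigAnd 2 ((Finset.univ : Finset P).toList.map fun p =>
      Formula.iff (.prop p x) (.prop p y)))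
    (bigAnd 2 ((Finset.univ : Finset Λ).toList.map fun a =>
      Formula.box a x (.dia a y (.svar 1))))

theorem phiSim_eq [DecidableEq V] (x y : V) :
    phiSim Λ P x y =
      Formula.nu 0 (.and (Formula.nu 1 (simStep Λ P x y)) (.repl (swapRepl x y) (.svar 0))) :=
  rfl

theorem noMuBinder_simStep (x y : V) {X : ℕ} (hX : X ≠ 2) : (simStep Λ P x y).NoMuBinder X := by
  refine ⟨noMuBinder_bigAnd hX.symm ?_, noMuBinder_bigAnd hX.symm ?_⟩ <;>
  · simp only [List.mem_map]
    rintro _ ⟨_, -, rfl⟩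
    simp [Formula.iff, Formula.imp, Formula.box, NoMuBinder]

theorem mem_sem_simStep [DecidableEq V] (hxy : x ≠ y) (𝒱 : ℕ → Set (V → L.S)) (v : V → L.S) :
    v ∈ sem L (simStep Λ P x y) 𝒱 ↔
      (∀ p, p ∈ L.rho (v x) ↔ p ∈ L.rho (v y)) ∧
        ∀ a s, L.Tr (v x) a s → ∃ t, L.Tr (v y) a t ∧ update (update v x s) y t ∈ 𝒱 1 := by
  simp only [simStep, sem, Set.mem_inter_iff, mem_sem_bigAnd, List.forall_mem_map,
    Finset.mem_toList, Finset.mem_univ, forall_true_left, mem_sem_iff_prop,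
    mem_sem_box_dia L _ hxy]

/-- A post-fixed point `Q` of `simStep` yields the simulation `{(w x, w y) | w ∈ Q}`;
conversely a simulation `R` yields the post-fixed point `{w | R (w x) (w y)}`. -/
theorem sem_nu_simStep [DecidableEq V] (hxy : x ≠ y) (𝒱 : ℕ → Set (V → L.S)) :
    sem L (Formula.nu 1 (simStep Λ P x y)) 𝒱 = {v | SimulatedBy L (v x) (v y)} := by
  ext v
  rw [mem_sem_nu L (noMuBinder_simStep x y (by norm_num))]
  constructor
  · rintro ⟨Q, hQ, hv⟩
    refine ⟨fun s t => ∃ w ∈ Q, w x = s ∧ w y = t, ?_, v, hv, rfl, rfl⟩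
    rintro _ _ ⟨w, hw, rfl, rfl⟩
    obtain ⟨hprops, hmoves⟩ := (mem_sem_simStep L hxy _ w).1 (hQ hw)
    refine ⟨hprops, fun a s hs => ?_⟩
    obtain ⟨t, ht, hmem⟩ := hmoves a s hs
    rw [update_self] at hmem
    exact ⟨t, ht, _, hmem, by rw [update_of_ne hxy, update_self], update_self ..⟩
  · rintro ⟨R, hR, hRv⟩
    refine ⟨{w | R (w x) (w y)}, fun w hw => ?_, hRv⟩
    obtain ⟨hprops, hmoves⟩ := hR _ _ hw
    refine (mem_sem_simStep L hxy _ w).2 ⟨hprops, fun a s hs => ?_⟩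
    obtain ⟨t, ht, hRst⟩ := hmoves a s hs
    refine ⟨t, ht, ?_⟩
    rwa [update_self, Set.mem_ofPred_eq, update_self, update_of_ne hxy, update_self]

end OneWay

theorem phiSim_characterizes_simulation_equivalence_general {Λ P V : Type} [Fintype Λ] [Fintype P]
    [DecidableEq V] (x y : V) (hxy : x ≠ y) (L : LTS Λ P)
    (v : V → L.S) :
    v ∈ sem L (phiSim Λ P x y) (fun _ => ∅) ↔ SimulationEquivalent L (v x) (v y) := by
  have hψ : (Formula.nu 1 (simStep Λ P x y)).NoMuBinder 0 :=
    ⟨one_ne_zero, (noMuBinder_simStep x y (by norm_num)).substNeg⟩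
  rw [phiSim_eq, swapRepl_eq_swap,
    mem_sem_nu_and_repl L hψ (Equiv.swap_apply_self x y) (fun _ => sem_nu_simStep L hxy _)]
  simp [simulationEquivalent_iff]

/-- the formula `phiSim` characterizes simulation equivalence: over any
finite LTS (with finitely many labels and propositions), a valuation `v` satisfies it
iff the states `v x` and `v y` are simulation equivalent. -/
theorem phiSim_characterizes_simulation_equivalence {Λ P V : Type} [Fintype Λ] [Fintype P]
    [DecidableEq V] (x y : V) (hxy : x ≠ y) (L : LTS Λ P) [Fintype L.S]
    (v : V → L.S) :
    v ∈ sem L (phiSim Λ P x y) (fun _ => ∅) ↔ SimulationEquivalent L (v x) (v y) :=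
  phiSim_characterizes_simulation_equivalence_general x y hxy L v
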